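/- Let 𝒜 = {a,b,c,d} and let ω^G be the Grigorchuk substitution sequence. Then the set of σ-preimages of ω^G inside Z(ω^G,σ) is exactly {b·ω^G, c·ω^G, d·ω^G}, where for a letter l the sequence l·x is defined by (l·x)(1) = l and (l·x)(n+1) = x(n). Moreover, ω^G is the unique element of Z(ω^G,σ) having more than one σ-preimage in Z(ω^G,σ). -/

import Mathlib

/-- The four-letter alphabet 𝒜 = {a,b,c,d}. -/
inductive A : Type
  | a | b | c | d
  deriving DecidableEq

instance : TopologicalSpace A := ⊥
instance : DiscreteTopology A := ⟨rfl⟩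

/-- The one-sided shift on sequences.  Sequences are 0-indexed here: index `n`
stands for position `n+1` of the paper's sequences `{1,2,3,…} → 𝒜`. -/
def shift {𝒜 : Type*} (x : ℕ → 𝒜) : ℕ → 𝒜 := fun n => x (n + 1)

/-- `Z(ω,σ)`: the closure of the forward shift-orbit of `ω`. -/
def orbitClosure {𝒜 : Type*} [TopologicalSpace 𝒜] (ω : ℕ → 𝒜) : Set (ℕ → 𝒜) :=
  closure {y | ∃ n : ℕ, shift^[n] ω = y}

/-- `l·x`: prepend the letter `l` to the sequence `x`. -/
def consSeq {𝒜 : Type*} (l : 𝒜) (x : ℕ → 𝒜) : ℕ → 𝒜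
  | 0 => l
  | n + 1 => x n

/-- The Grigorchuk substitution sequence `ω^G` (0-indexed: `omegaG n` is the letter at
position `m = n+1`).  Writing `m = 2^k(2l+1)`: the letter is `a` if `k = 0`, and for
`k ≥ 1` it is `d`, `c`, or `b` according as `k ≡ 0, 1, 2 (mod 3)`. -/
def omegaG : ℕ → A := fun n =>
  if padicValNat 2 (n + 1) = 0 then A.a
  else if padicValNat 2 (n + 1) % 3 = 0 then A.d
  else if padicValNat 2 (n + 1) % 3 = 1 then A.c
  else A.b

/-!
The letter of `ω^G` at position `m` depends only on `v₂(m)`: odd positions carry `a`, and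
`ω^G(2m) = ρ(ω^G(m))`. A sequence lies in `Z(ω^G,σ)` iff all its prefixes occur in `ω^G`.
Position `2^j` carries `b`, `c` or `d` according to `j mod 3` and is followed by the prefix of
`ω^G` of length `2^j - 1`, so `l·ω^G ∈ Z(ω^G,σ)` for `l ≠ a`; `a·ω^G` is excluded since `aa`
never occurs. If a word of length `2^(k+2)` occurs after two different letters, both occurrences
start at odd positions, and deleting the `a`'s at odd positions yields a word of half the length
occurring after two different letters; by induction the word begins with the prefix of `ω^G` of
length `2^k`. Hence an infinite word with two different left extensions in `Z(ω^G,σ)` is `ω^G`.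
-/

open PiNat

section Shift

variable {𝒜 : Type*}

lemma shift_iterate_apply (x : ℕ → 𝒜) (n i : ℕ) : shift^[n] x i = x (n + i) := by
  induction n generalizing x with
  | zero => simp
  | succ n ih =>
    rw [Function.iterate_succ_apply, ih]
    exact congrArg x (by omega)

lemma consSeq_zero_shift (x : ℕ → 𝒜) : consSeq (x 0) (shift x) = x := by
  funext n
  cases n <;> rfl

lemma apply_zero_ne_of_shift_eq {x y : ℕ → 𝒜} (hs : shift x = shift y) (hne : x ≠ y) :
    x 0 ≠ y 0 := by
  intro h
  rw [← consSeq_zero_shift x, ← consSeq_zero_shift y, h, hs] at hne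
  exact hne rfl

variable [TopologicalSpace 𝒜] [DiscreteTopology 𝒜]

theorem mem_orbitClosure_iff {ω y : ℕ → 𝒜} :
    y ∈ orbitClosure ω ↔ ∀ N, ∃ n, ∀ i < N, ω (n + i) = y i := by
  rw [orbitClosure, (isTopologicalBasis_cylinders fun _ => 𝒜).mem_closure_iff]
  constructor
  · intro hy N
    obtain ⟨_, hz, n, rfl⟩ := hy _ ⟨y, N, rfl⟩ (self_mem_cylinder y N)
    exact ⟨n, fun i hi => (shift_iterate_apply ω n i).symm.trans (mem_cylinder_iff.1 hz i hi)⟩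
  · rintro h _ ⟨x, N, rfl⟩ hy
    obtain ⟨n, hn⟩ := h N
    refine ⟨shift^[n] ω, mem_cylinder_iff.2 fun i hi => ?_, n, rfl⟩
    rw [shift_iterate_apply, hn i hi]
    exact mem_cylinder_iff.1 hy i hi

theorem consSeq_mem_orbitClosure_iff {ω x : ℕ → 𝒜} {l : 𝒜} :
    consSeq l x ∈ orbitClosure ω ↔ ∀ N, ∃ n, ω n = l ∧ ∀ i < N, ω (n + 1 + i) = x i := by
  rw [mem_orbitClosure_iff]
  constructor
  · intro h N
    obtain ⟨n, hn⟩ := h (N + 1)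
    exact ⟨n, hn 0 N.succ_pos, fun i hi => by rw [add_right_comm]; exact hn (i + 1) (by omega)⟩
  · intro h N
    obtain ⟨n, hl, hx⟩ := h N
    refine ⟨n, fun i hi => ?_⟩
    cases i with
    | zero => exact hl
    | succ i => rw [← add_assoc, add_right_comm]; exact hx i (by omega)

end Shift

lemma padicValNat_pow_add {p j t : ℕ} [hp : Fact p.Prime] (ht : 0 < t) (htj : t < p ^ j) :
    padicValNat p (p ^ j + t) = padicValNat p t := by
  have hv : padicValNat p t < j :=
    (Nat.pow_lt_pow_iff_right hp.out.one_lt).1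
      ((Nat.le_of_dvd ht pow_padicValNat_dvd).trans_lt htj)
  have h := padicValRat.add_eq_of_lt (p := p) (q := t) (r := p ^ j)
    (by exact_mod_cast (by omega : t + p ^ j ≠ 0)) (by exact_mod_cast ht.ne')
    (by exact_mod_cast (pow_pos hp.out.pos j).ne') (by
      rw [padicValRat.of_nat, padicValRat.pow, padicValRat.self hp.out.one_lt, mul_one]
      exact_mod_cast hv)
  rw [add_comm]
  exact_mod_cast h

namespace Grigorchuk

def valLetter (k : ℕ) : A :=
  if k = 0 then A.a else if k % 3 = 0 then A.d else if k % 3 = 1 then A.c else A.b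

/-- `letter m = ω^G(m)` in the paper's 1-based indexing. -/
def letter (m : ℕ) : A := valLetter (padicValNat 2 m)

lemma omegaG_apply (n : ℕ) : omegaG n = letter (n + 1) := rfl

/-- `letter (2 * m) = rho (letter m)`: `rho` agrees with `τ_G` on `b, c, d` and sends `a` to the
middle letter of `τ_G a = aca`. -/
def rho : A → A
  | .a => .c
  | .b => .d
  | .c => .b
  | .d => .c

lemma rho_injOn : Set.InjOn rho {x | x ≠ A.a} := by
  intro x hx y hy h
  cases x <;> cases y <;> simp_all [rho]

lemma rho_eq_c_iff {x : A} : rho x = A.c ↔ x = A.a ∨ x = A.d := by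
  cases x <;> simp [rho]

lemma valLetter_succ (k : ℕ) : valLetter (k + 1) = rho (valLetter k) := by
  obtain h | h | h : k % 3 = 0 ∨ k % 3 = 1 ∨ k % 3 = 2 := by omega
  all_goals
    unfold valLetter
    split_ifs <;> simp_all [rho] <;> omega

lemma valLetter_eq_a_iff {k : ℕ} : valLetter k = A.a ↔ k = 0 := by
  unfold valLetter
  split_ifs <;> simp_all

lemma three_le_of_valLetter_eq_d {k : ℕ} (h : valLetter k = A.d) : 3 ≤ k := by
  unfold valLetter at h
  split_ifs at h
  omega

lemma exists_lt_valLetter_eq {l : A} (hl : l ≠ A.a) (N : ℕ) : ∃ j, N < j ∧ valLetter j = l := by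
  cases l
  · exact absurd rfl hl
  · exact ⟨3 * N + 5, by omega, by simp [valLetter, show (3 * N + 5) % 3 = 2 by omega]⟩
  · exact ⟨3 * N + 4, by omega, by simp [valLetter, show (3 * N + 4) % 3 = 1 by omega]⟩
  · exact ⟨3 * N + 3, by omega, by simp [valLetter, show (3 * N + 3) % 3 = 0 by omega]⟩

lemma letter_of_odd {m : ℕ} (h : m % 2 = 1) : letter m = A.a := by
  rw [letter, padicValNat.eq_zero_of_not_dvd (by omega)]
  rfl

lemma letter_ne_a_of_even {m : ℕ} (h0 : m ≠ 0) (h : m % 2 = 0) : letter m ≠ A.a := by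
  rw [letter, Ne, valLetter_eq_a_iff, ← Ne, ← pos_iff_ne_zero]
  exact one_le_padicValNat_of_dvd h0 (by omega)

lemma letter_two_mul {m : ℕ} (h0 : m ≠ 0) : letter (2 * m) = rho (letter m) := by
  rw [letter, padicValNat.mul two_ne_zero h0, padicValNat.self one_lt_two, add_comm,
    valLetter_succ, letter]

lemma eight_dvd_of_letter_eq_d {m : ℕ} (h : letter m = A.d) : 8 ∣ m :=
  (pow_dvd_pow 2 (three_le_of_valLetter_eq_d h)).trans pow_padicValNat_dvd

lemma letter_two_pow (j : ℕ) : letter (2 ^ j) = valLetter j := by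
  rw [letter, padicValNat.prime_pow]

lemma letter_two_pow_add {j t : ℕ} (ht : 0 < t) (htj : t < 2 ^ j) :
    letter (2 ^ j + t) = letter t := by
  rw [letter, padicValNat_pow_add ht htj, letter]

def FactorEq (p q n : ℕ) : Prop := ∀ i < n, letter (p + i) = letter (q + i)

lemma even_of_letter_ne {p q : ℕ} (hne : letter p ≠ letter q)
    (h : letter (p + 1) = letter (q + 1)) : p % 2 = 0 ∧ q % 2 = 0 := by
  rcases Nat.mod_two_eq_zero_or_one p with hp2 | hp2 <;>
    rcases Nat.mod_two_eq_zero_or_one q with hq2 | hq2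
  · exact ⟨hp2, hq2⟩
  · exact absurd (h.symm.trans (letter_of_odd (by omega))) (letter_ne_a_of_even (by omega) (by omega))
  · exact absurd (h.trans (letter_of_odd (by omega))) (letter_ne_a_of_even (by omega) (by omega))
  · exact absurd ((letter_of_odd hp2).trans (letter_of_odd hq2).symm) hne

lemma letter_ne_of_letter_two_mul_ne {p q : ℕ} (hp : p ≠ 0) (hq : q ≠ 0)
    (h : letter (2 * p) ≠ letter (2 * q)) : letter p ≠ letter q := by
  rw [letter_two_mul hp, letter_two_mul hq] at h
  exact fun h' => h (congrArg rho h')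

lemma FactorEq.double {r s n : ℕ} (h : FactorEq (r + 1) (s + 1) n) :
    FactorEq (2 * r + 1) (2 * s + 1) (2 * n) := by
  intro i hi
  obtain ⟨j, rfl | rfl⟩ := Nat.even_or_odd' i
  · rw [letter_of_odd (by omega), letter_of_odd (by omega)]
  · rw [show 2 * r + 1 + (2 * j + 1) = 2 * (r + 1 + j) by ring,
      show 2 * s + 1 + (2 * j + 1) = 2 * (s + 1 + j) by ring,
      letter_two_mul (by omega), letter_two_mul (by omega), h j (by omega)]

/-- Two occurrences of a word of `ρ`-images have the same parity: otherwise the collision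
`ρ a = ρ d` would put letters `d`, hence multiples of `8`, at two positions at distance `2`. -/
lemma mod_two_eq_of_rho_letter_eq {r s : ℕ}
    (h : ∀ j < 4, rho (letter (r + 1 + j)) = rho (letter (s + 1 + j))) : r % 2 = s % 2 := by
  by_contra hrs
  have hd : ∀ j < 4, (r + 1 + j) % 2 = 0 → 8 ∣ r + 1 + j := by
    intro j hj heven
    have hc := h j hj
    rw [letter_of_odd (m := s + 1 + j) (by omega)] at hc
    rcases rho_eq_c_iff.1 hc with ha | hd
    · exact absurd ha (letter_ne_a_of_even (by omega) heven)
    · exact eight_dvd_of_letter_eq_d hd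
  obtain ⟨j, hj, heven⟩ : ∃ j < 2, (r + 1 + j) % 2 = 0 := ⟨(r + 1) % 2, by omega, by omega⟩
  have h₁ := hd j (by omega) heven
  have h₂ := hd (j + 2) (by omega) (by omega)
  omega

lemma FactorEq.half {r s n : ℕ} (hn : 4 ≤ n) (h : FactorEq (2 * r + 1) (2 * s + 1) (2 * n)) :
    FactorEq (r + 1) (s + 1) n := by
  have hrho : ∀ j < n, rho (letter (r + 1 + j)) = rho (letter (s + 1 + j)) := by
    intro j hj
    have := h (2 * j + 1) (by omega)
    rwa [show 2 * r + 1 + (2 * j + 1) = 2 * (r + 1 + j) by ring,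
      show 2 * s + 1 + (2 * j + 1) = 2 * (s + 1 + j) by ring,
      letter_two_mul (by omega), letter_two_mul (by omega)] at this
  have hrs := mod_two_eq_of_rho_letter_eq fun j hj => hrho j (by omega)
  intro j hj
  rcases Nat.mod_two_eq_zero_or_one (r + 1 + j) with heven | hodd
  · exact rho_injOn (letter_ne_a_of_even (by omega) heven)
      (letter_ne_a_of_even (by omega) (by omega)) (hrho j hj)
  · rw [letter_of_odd hodd, letter_of_odd (by omega)]

theorem factorEq_one_of_letter_ne (k : ℕ) :
    ∀ p q, p ≠ 0 → q ≠ 0 → letter p ≠ letter q → FactorEq (p + 1) (q + 1) (2 ^ (k + 2)) →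
      FactorEq (p + 1) 1 (2 ^ k) := by
  induction k with
  | zero =>
    intro p q hp hq hne h i hi
    obtain ⟨hp2, -⟩ := even_of_letter_ne hne (h 0 (by norm_num))
    rw [letter_of_odd (by omega), letter_of_odd (by omega)]
  | succ k ih =>
    intro p q hp hq hne h
    obtain ⟨hp2, hq2⟩ := even_of_letter_ne hne (h 0 (by positivity))
    obtain ⟨r, rfl⟩ : ∃ r, p = 2 * r := ⟨p / 2, by omega⟩
    obtain ⟨s, rfl⟩ : ∃ s, q = 2 * s := ⟨q / 2, by omega⟩
    rw [show 2 ^ (k + 1 + 2) = 2 * 2 ^ (k + 2) by ring] at h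
    have h4 : 4 ≤ 2 ^ (k + 2) := by simpa using Nat.pow_le_pow_right two_pos (Nat.le_add_left 2 k)
    have hrs := letter_ne_of_letter_two_mul_ne (by omega) (by omega) hne
    rw [pow_succ']
    exact (ih r s (by omega) (by omega) hrs (h.half h4)).double

lemma consSeq_mem_orbitClosure_omegaG_iff {l : A} :
    consSeq l omegaG ∈ orbitClosure omegaG ↔ l ≠ A.a := by
  rw [consSeq_mem_orbitClosure_iff]
  constructor
  · rintro h rfl
    obtain ⟨n, h₁, h₂⟩ := h 1
    have h₁ : letter (n + 1) = A.a := h₁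
    have h₂ : letter (n + 2) = A.a := (h₂ 0 one_pos).trans (letter_of_odd rfl)
    rcases Nat.mod_two_eq_zero_or_one (n + 1) with heven | hodd
    · exact letter_ne_a_of_even (by omega) heven h₁
    · exact letter_ne_a_of_even (by omega) (by omega) h₂
  · intro hl N
    obtain ⟨j, hNj, hj⟩ := exists_lt_valLetter_eq hl N
    have hj' : j < 2 ^ j := Nat.lt_two_pow_self
    refine ⟨2 ^ j - 1, ?_, fun i hi => ?_⟩
    · rw [omegaG_apply, Nat.sub_add_cancel Nat.one_le_two_pow, letter_two_pow, hj]
    · rw [omegaG_apply, omegaG_apply, show 2 ^ j - 1 + 1 + i + 1 = 2 ^ j + (i + 1) by omega,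
        letter_two_pow_add (by omega) (by omega)]

theorem eq_omegaG_of_consSeq_mem {w : ℕ → A} {l₁ l₂ : A} (hl : l₁ ≠ l₂)
    (h₁ : consSeq l₁ w ∈ orbitClosure omegaG) (h₂ : consSeq l₂ w ∈ orbitClosure omegaG) :
    w = omegaG := by
  funext i
  obtain ⟨n₁, hl₁, hw₁⟩ := consSeq_mem_orbitClosure_iff.1 h₁ (2 ^ (i + 2))
  obtain ⟨n₂, hl₂, hw₂⟩ := consSeq_mem_orbitClosure_iff.1 h₂ (2 ^ (i + 2))
  have hprefix := factorEq_one_of_letter_ne i (n₁ + 1) (n₂ + 1) (by omega) (by omega)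
    (by rwa [← omegaG_apply, ← omegaG_apply, hl₁, hl₂])
    (fun j hj => by
      have h := (hw₁ j hj).trans (hw₂ j hj).symm
      simp only [omegaG_apply] at h
      convert h using 2 <;> omega)
    i Nat.lt_two_pow_self
  rw [← hw₁ i (Nat.lt_two_pow_self.trans (Nat.pow_lt_pow_right one_lt_two (by omega))),
    omegaG_apply, omegaG_apply]
  convert hprefix using 2 <;> omega

end Grigorchuk

open Grigorchuk in
/-- The shift-preimages of `ω^G` inside `Z(ω^G,σ)` are exactly `b·ω^G, c·ω^G, d·ω^G`;
moreover `ω^G` is the unique element of `Z(ω^G,σ)` with more than one shift-preimage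
in `Z(ω^G,σ)`. -/
theorem stmt7 :
    {y | y ∈ orbitClosure omegaG ∧ shift y = omegaG} =
      {consSeq A.b omegaG, consSeq A.c omegaG, consSeq A.d omegaG} ∧
    (∃ η₁ ∈ orbitClosure omegaG, ∃ η₂ ∈ orbitClosure omegaG,
      η₁ ≠ η₂ ∧ shift η₁ = omegaG ∧ shift η₂ = omegaG) ∧
    ∀ w ∈ orbitClosure omegaG,
      (∃ η₁ ∈ orbitClosure omegaG, ∃ η₂ ∈ orbitClosure omegaG,
        η₁ ≠ η₂ ∧ shift η₁ = w ∧ shift η₂ = w) → w = omegaG := by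
  refine ⟨?_, ?_, ?_⟩
  · ext y
    simp only [Set.mem_ofPred_eq, Set.mem_insert_iff, Set.mem_singleton_iff]
    constructor
    · rintro ⟨hy, hs⟩
      rw [← consSeq_zero_shift y, hs] at hy ⊢
      generalize y 0 = l at hy
      cases l <;> simp_all [consSeq_mem_orbitClosure_omegaG_iff]
    · rintro (rfl | rfl | rfl) <;>
        exact ⟨consSeq_mem_orbitClosure_omegaG_iff.2 (by decide), rfl⟩
  · exact ⟨consSeq A.b omegaG, consSeq_mem_orbitClosure_omegaG_iff.2 (by decide),
      consSeq A.c omegaG, consSeq_mem_orbitClosure_omegaG_iff.2 (by decide),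
      fun h => by simpa [consSeq] using congrFun h 0, rfl, rfl⟩
  · rintro w - ⟨η₁, h₁, η₂, h₂, hne, rfl, hs⟩
    rw [← consSeq_zero_shift η₁] at h₁
    rw [← consSeq_zero_shift η₂, hs] at h₂
    exact eq_omegaG_of_consSeq_mem (apply_zero_ne_of_shift_eq hs.symm hne) h₁ h₂
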